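/- arXiv:math/0003122 — 2 statements merged into one kernel-verified Lean document; each statement's English description precedes it below -/
import Mathlib

section
/- Let ε_i : V_i → A_i (i = 1,2,3) be right resolutions of objects V_i in an abelian category, let φ_{ij} : ⟨V_i, A_j⟩ → ⟨A_i, A_j⟩ (i < j) be chain maps satisfying φ_{ij}(f) ∘ ε_i = f for all f, and let μ : ⟨V_2,A_3⟩ ⊗ ⟨V_1,A_2⟩ → ⟨V_1,A_3⟩ be a chain map such that φ_{13} ∘ μ is chain homotopic to the composition c ∘ (φ_{23} ⊗ φ_{12}). Then for all classes α ∈ [V_2,A_3] and β ∈ [V_1,A_2], can_{13}(μ_*(α ⊗ β)) equals the cup-product of can_{23}(α) and can_{12}(β) in Ext(V_1,V_3), where Ext(V_i,A_j), Ext(A_i,A_j), Ext(V_i,V_j) are identified via the quasi-isomorphisms ε. -/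
/-!
The homotopy `H` shows that the cocycles `φ₁₃ (μ u v)` and `φ₁₂ v ∘ φ₂₃ u` of `⟨A₁, A₃⟩` are
cohomologous, so they have the same image in the derived category. By condition (a),
precomposing with `ε` turns `can (φ_{ij} f)` into `can f`, and `can` is multiplicative: the
class of a composite of cocycles is the composite of their shifted classes. Chasing
`can (μ u v)` through these identities yields the cup product.
-/

open CategoryTheory Limits CochainComplex HomComplex DerivedCategory

universe u v w t

variable {k : Type t} [CommRing k] {C : Type u} [Category.{v} C] [Abelian C]
  [CategoryTheory.Linear k C] [HasDerivedCategory.{w} C]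

/-- The complex concentrated in degree `0` associated to an object. -/
noncomputable abbrev sgl (X : C) : CochainComplex C ℤ :=
  (HomologicalComplex.single C (ComplexShape.up ℤ) 0).obj X

/-- A cocycle of degree `n` in `⟨F,G⟩`, as a chain map `F ⟶ G⟦n⟧`. -/
noncomputable def cocycleToHom {F G : CochainComplex C ℤ} {n : ℤ}
    (w : Cochain F G n) (hw : δ n (n + 1) w = 0) : F ⟶ G⟦n⟧ :=
  (Cocycle.equivHom F (G⟦n⟧)).symm ((Cocycle.mk w (n + 1) rfl hw).rightShift n 0 (zero_add n))

/-- The canonical map `can : [F,G]^n → Ext^n(F,G) = Hom_D(F,G[n])` on cocycle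
representatives. -/
noncomputable def canD {F G : CochainComplex C ℤ} {n : ℤ}
    (w : Cochain F G n) (hw : δ n (n + 1) w = 0) : Q.obj F ⟶ (Q.obj G)⟦n⟧ :=
  Q.map (cocycleToHom w hw) ≫ (Q.commShiftIso n).hom.app G

set_option linter.unusedSectionVars false

lemma cocycleToHom_f {F G : CochainComplex C ℤ} {n : ℤ}
    (w : Cochain F G n) (hw : δ n (n + 1) w = 0) (i j : ℤ) (hij : i + n = j) :
    (cocycleToHom w hw).f i =
      w.v i j hij ≫ (G.shiftFunctorObjXIso n i j (by lia)).inv := by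
  subst hij
  simp [cocycleToHom, Cocycle.rightShift,
    Cochain.rightShift_v _ n 0 (zero_add n) i i (add_zero i) (i + n) rfl]
  rfl

lemma ofHom_cocycleToHom {F G : CochainComplex C ℤ} {n : ℤ}
    (w : Cochain F G n) (hw : δ n (n + 1) w = 0) :
    Cochain.ofHom (cocycleToHom w hw) = w.rightShift n 0 (zero_add n) := by
  simp [cocycleToHom, Cocycle.rightShift]

lemma cocycleToHom_eq_comp {F G H : CochainComplex C ℤ} (f : F ⟶ G) {n : ℤ}
    (x : Cochain G H n) (hx : δ n (n + 1) x = 0) (w : Cochain F H n)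
    (hw : δ n (n + 1) w = 0) (h : (Cochain.ofHom f).comp x (zero_add n) = w) :
    cocycleToHom w hw = f ≫ cocycleToHom x hx := by
  subst h
  ext i
  rw [HomologicalComplex.comp_f, cocycleToHom_f _ _ i (i + n) rfl,
    cocycleToHom_f _ _ i (i + n) rfl, Cochain.zero_cochain_comp_v _ _ i (i + n) rfl,
    Cochain.ofHom_v, Category.assoc]

lemma cocycleToHom_comp {F G H : CochainComplex C ℤ} {p q n : ℤ} (hn : p + q = n)
    (a : Cochain F G p) (ha : δ p (p + 1) a = 0) (b : Cochain G H q) (hb : δ q (q + 1) b = 0)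
    (hab : δ n (n + 1) (a.comp b hn) = 0) :
    cocycleToHom (a.comp b hn) hab =
      cocycleToHom a ha ≫ (cocycleToHom b hb)⟦p⟧' ≫
        (CategoryTheory.shiftFunctorAdd' (CochainComplex C ℤ) q p n (by lia)).inv.app H := by
  ext i
  rw [HomologicalComplex.comp_f, HomologicalComplex.comp_f,
    cocycleToHom_f _ _ i (i + n) rfl, cocycleToHom_f _ _ i (i + p) rfl,
    shiftFunctor_map_f', cocycleToHom_f _ _ (i + p) (i + n) (by lia),
    a.comp_v b hn i (i + p) (i + n) rfl (by lia), shiftFunctorAdd'_inv_app_f']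
  simp only [shiftFunctorObjXIso, Category.assoc]
  -- the identifications `(K⟦a⟧).X i = K.X (i + a)` are definitional only, hence `erw`
  erw [Category.id_comp, Category.comp_id]
  congr 1
  simp only [HomologicalComplex.XIsoOfEq, eqToIso.inv, eqToIso.hom]
  erw [Category.assoc, eqToHom_trans, eqToHom_refl, Category.comp_id]

lemma Q_map_cocycleToHom_eq_of_δ_eq_sub {F G : CochainComplex C ℤ} {n : ℤ}
    (a b : Cochain F G n) (ha : δ n (n + 1) a = 0) (hb : δ n (n + 1) b = 0)
    (K : Cochain F G (n - 1)) (hK : δ (n - 1) n K = a - b) :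
    Q.map (cocycleToHom a ha) = Q.map (cocycleToHom b hb) := by
  refine HomologicalComplexUpToQuasiIso.Q_map_eq_of_homotopy ((Cochain.equivHomotopy _ _).symm
    ⟨n.negOnePow • K.rightShift n (-1) (by lia), ?_⟩)
  rw [ofHom_cocycleToHom, ofHom_cocycleToHom, δ_units_smul,
    K.δ_rightShift n (-1) 0 (by lia) n (zero_add n), hK, smul_smul, Int.units_mul_self,
    one_smul, ← Cochain.rightShift_add, sub_add_cancel]

lemma canD_eq_of_δ_eq_sub {F G : CochainComplex C ℤ} {n : ℤ}
    (a b : Cochain F G n) (ha : δ n (n + 1) a = 0) (hb : δ n (n + 1) b = 0)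
    (K : Cochain F G (n - 1)) (hK : δ (n - 1) n K = a - b) :
    canD a ha = canD b hb := by
  rw [canD, canD, Q_map_cocycleToHom_eq_of_δ_eq_sub a b ha hb K hK]

lemma canD_eq_map_comp {F G H : CochainComplex C ℤ} (f : F ⟶ G) {n : ℤ}
    (x : Cochain G H n) (hx : δ n (n + 1) x = 0) (w : Cochain F H n)
    (hw : δ n (n + 1) w = 0) (h : (Cochain.ofHom f).comp x (zero_add n) = w) :
    canD w hw = Q.map f ≫ canD x hx := by
  rw [canD, canD, cocycleToHom_eq_comp f x hx w hw h, Q.map_comp, Category.assoc]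

lemma canD_comp {F G H : CochainComplex C ℤ} {p q n : ℤ} (hn : p + q = n)
    (a : Cochain F G p) (ha : δ p (p + 1) a = 0) (b : Cochain G H q) (hb : δ q (q + 1) b = 0)
    (hab : δ n (n + 1) (a.comp b hn) = 0) :
    canD (a.comp b hn) hab =
      canD a ha ≫ (canD b hb)⟦p⟧' ≫
        (CategoryTheory.shiftFunctorAdd' (DerivedCategory C) q p n (by lia)).inv.app (Q.obj H) := by
  simp [canD, cocycleToHom_comp hn a ha b hb hab, Q.commShiftIso_add' (show q + p = n by lia)]

-- `H` is not assumed additive, so `H (δ u) v = H 0 v` and `H u (δ v) = H u 0` need not vanish;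
-- they cancel against the homotopy formula at `(0, v)`, `(u, 0)` and `(0, 0)`.
lemma exists_δ_eq_sub_comp {F₁ F₂ A₁ A₂ A₃ : CochainComplex C ℤ}
    (φ₁₂ : ∀ n : ℤ, Cochain F₁ A₂ n →+ Cochain A₁ A₂ n)
    (φ₁₃ : ∀ n : ℤ, Cochain F₁ A₃ n →+ Cochain A₁ A₃ n)
    (φ₂₃ : ∀ n : ℤ, Cochain F₂ A₃ n →+ Cochain A₂ A₃ n)
    (μ : ∀ (q p r : ℤ), q + p = r → Cochain F₂ A₃ q → Cochain F₁ A₂ p → Cochain F₁ A₃ r)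
    (hμadd₁ : ∀ (q p r : ℤ) (h : q + p = r) f f' g,
      μ q p r h (f + f') g = μ q p r h f g + μ q p r h f' g)
    (hμadd₂ : ∀ (q p r : ℤ) (h : q + p = r) f g g',
      μ q p r h f (g + g') = μ q p r h f g + μ q p r h f g')
    (H : ∀ (q p r : ℤ), q + p = r + 1 → Cochain F₂ A₃ q → Cochain F₁ A₂ p → Cochain A₁ A₃ r)
    (hH : ∀ (q p r : ℤ) (h : q + p = r) f g,
      φ₁₃ r (μ q p r h f g) - (φ₁₂ p g).comp (φ₂₃ q f) (show p + q = r by lia) =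
        δ (r - 1) r (H q p (r - 1) (by lia) f g) +
          H (q + 1) p r (by lia) (δ q (q + 1) f) g +
          (q.negOnePow : ℤ) • H q (p + 1) r (by lia) f (δ p (p + 1) g))
    {q p : ℤ} {u : Cochain F₂ A₃ q} (hu : δ q (q + 1) u = 0)
    {v : Cochain F₁ A₂ p} (hv : δ p (p + 1) v = 0) :
    ∃ K : Cochain A₁ A₃ (q + p - 1), δ (q + p - 1) (q + p) K =
      φ₁₃ (q + p) (μ q p (q + p) rfl u v) - (φ₁₂ p v).comp (φ₂₃ q u) (add_comm p q) := by
  have hμ₀ₗ : μ q p (q + p) rfl 0 v = 0 := by simpa using hμadd₁ q p (q + p) rfl 0 0 v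
  have hμ₀ᵣ (f) : μ q p (q + p) rfl f 0 = 0 := by simpa using hμadd₂ q p (q + p) rfl f 0 0
  have huv := hH q p (q + p) rfl u v
  have h0v := hH q p (q + p) rfl 0 v
  have hu0 := hH q p (q + p) rfl u 0
  have h00 := hH q p (q + p) rfl 0 0
  simp only [hu, hv, hμ₀ₗ, hμ₀ᵣ, map_zero, Cochain.comp_zero, Cochain.zero_comp, δ_zero,
    sub_zero] at huv h0v hu0 h00
  have hqp : q + p = q + p - 1 + 1 := by lia
  refine ⟨H q p _ hqp u v - H q p _ hqp 0 v - H q p _ hqp u 0 + H q p _ hqp 0 0, ?_⟩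
  rw [δ_add, δ_sub, δ_sub]
  linear_combination (norm := abel) -huv + h0v + hu0 - h00

theorem proposition1
    (V₁ V₂ : C) (A₁ A₂ A₃ : CochainComplex C ℤ)
    (ε₁ : sgl V₁ ⟶ A₁) (ε₂ : sgl V₂ ⟶ A₂) [QuasiIso ε₂]
    -- the chain maps φ_{ij} : ⟨V_i,A_j⟩ → ⟨A_i,A_j⟩ for i < j
    (φ₁₂ : ∀ n : ℤ, Cochain (sgl V₁) A₂ n →+ Cochain A₁ A₂ n)
    (φ₁₃ : ∀ n : ℤ, Cochain (sgl V₁) A₃ n →+ Cochain A₁ A₃ n)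
    (φ₂₃ : ∀ n : ℤ, Cochain (sgl V₂) A₃ n →+ Cochain A₂ A₃ n)
    (hφ₁₂δ : ∀ (n : ℤ) f, δ n (n + 1) (φ₁₂ n f) = φ₁₂ (n + 1) (δ n (n + 1) f))
    (hφ₁₃δ : ∀ (n : ℤ) f, δ n (n + 1) (φ₁₃ n f) = φ₁₃ (n + 1) (δ n (n + 1) f))
    (hφ₂₃δ : ∀ (n : ℤ) f, δ n (n + 1) (φ₂₃ n f) = φ₂₃ (n + 1) (δ n (n + 1) f))
    -- condition (a): φ_{ij}(f) ∘ ε_i = f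
    (hφ₁₂ε : ∀ (n : ℤ) f, (Cochain.ofHom ε₁).comp (φ₁₂ n f) (zero_add n) = f)
    (hφ₁₃ε : ∀ (n : ℤ) f, (Cochain.ofHom ε₁).comp (φ₁₃ n f) (zero_add n) = f)
    (hφ₂₃ε : ∀ (n : ℤ) f, (Cochain.ofHom ε₂).comp (φ₂₃ n f) (zero_add n) = f)
    -- the pairing μ : ⟨V_2,A_3⟩ ⊗ ⟨V_1,A_2⟩ → ⟨V_1,A_3⟩
    (μ : ∀ (q p r : ℤ), q + p = r →
      Cochain (sgl V₂) A₃ q → Cochain (sgl V₁) A₂ p → Cochain (sgl V₁) A₃ r)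
    (hμadd₁ : ∀ (q p r : ℤ) (h : q + p = r) f f' g,
      μ q p r h (f + f') g = μ q p r h f g + μ q p r h f' g)
    (hμadd₂ : ∀ (q p r : ℤ) (h : q + p = r) f g g',
      μ q p r h f (g + g') = μ q p r h f g + μ q p r h f g')
    -- condition (b): φ_{13} ∘ μ is homotopic to c ∘ (φ_{23} ⊗ φ_{12})
    (H : ∀ (q p r : ℤ), q + p = r + 1 →
      Cochain (sgl V₂) A₃ q → Cochain (sgl V₁) A₂ p → Cochain A₁ A₃ r)
    (hH : ∀ (q p r : ℤ) (h : q + p = r) f g,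
      φ₁₃ r (μ q p r h f g) - (φ₁₂ p g).comp (φ₂₃ q f) (show p + q = r by omega) =
        δ (r - 1) r (H q p (r - 1) (by omega) f g) +
          H (q + 1) p r (by omega) (δ q (q + 1) f) g +
          (q.negOnePow : ℤ) • H q (p + 1) r (by omega) f (δ p (p + 1) g)) :
    -- conclusion: for all classes α, β represented by cocycles u, v, the diagram commutes:
    ∀ (q p : ℤ) (u : Cochain (sgl V₂) A₃ q) (hu : δ q (q + 1) u = 0)
      (v : Cochain (sgl V₁) A₂ p) (hv : δ p (p + 1) v = 0)
      (huv : δ (q + p) (q + p + 1) (μ q p (q + p) rfl u v) = 0),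
      canD (μ q p (q + p) rfl u v) huv =
        canD v hv ≫ (inv (Q.map ε₂) ≫ canD u hu)⟦p⟧' ≫
          (CategoryTheory.shiftFunctorAdd' (DerivedCategory C) q p (q + p) rfl).inv.app (Q.obj A₃) := by
  intro q p u hu v hv huv
  have hu' : δ q (q + 1) (φ₂₃ q u) = 0 := by rw [hφ₂₃δ, hu, map_zero]
  have hv' : δ p (p + 1) (φ₁₂ p v) = 0 := by rw [hφ₁₂δ, hv, map_zero]
  have huv' : δ (q + p) (q + p + 1) (φ₁₃ (q + p) (μ q p (q + p) rfl u v)) = 0 := by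
    rw [hφ₁₃δ, huv, map_zero]
  have hvu' : δ (q + p) (q + p + 1) ((φ₁₂ p v).comp (φ₂₃ q u) (add_comm p q)) = 0 := by
    simp [δ_comp _ _ (add_comm p q) (p + 1) (q + 1) (q + p + 1) rfl rfl (by lia), hu', hv']
  obtain ⟨K, hK⟩ := exists_δ_eq_sub_comp φ₁₂ φ₁₃ φ₂₃ μ hμadd₁ hμadd₂ H hH hu hv
  rw [canD_eq_map_comp ε₁ _ huv' _ huv (hφ₁₃ε _ _), canD_eq_of_δ_eq_sub _ _ huv' hvu' K hK,
    canD_comp (add_comm p q) _ hv' _ hu' hvu', canD_eq_map_comp ε₁ _ hv' _ hv (hφ₁₂ε p v),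
    canD_eq_map_comp ε₂ _ hu' _ hu (hφ₂₃ε q u), IsIso.inv_hom_id_assoc, Category.assoc]
end

section
/- If φ : ⟨V,A⟩ → ⟨A,A⟩ is a chain map of hom-complexes with φ(f) ∘ ε = f for all f, where ε : V → A is a right resolution, then the induced map H(φ) : [V,A] → [A,A] on cohomology (homotopy classes) is a section of the restriction map [ε,A] : [A,A] → [V,A]; consequently can_{V,A} = Ext(ε,A) ∘ can_{A,A} ∘ H(φ), i.e. the square relating H(φ), the canonical maps to Ext, and pre-composition with ε commutes. -/
open CategoryTheory Limits CochainComplex HomComplex DerivedCategory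

universe u v w

variable {C : Type u} [Category.{v} C] [Abelian C] [HasDerivedCategory.{w} C]

omit [HasDerivedCategory.{w} C] in
lemma comp_cocycleToHom {F F' G : CochainComplex C ℤ} {n : ℤ} (e : F' ⟶ F)
    (w : Cochain F G n) (hw : δ n (n + 1) w = 0) (w' : Cochain F' G n)
    (hw' : δ n (n + 1) w' = 0) (h : (Cochain.ofHom e).comp w (zero_add n) = w') :
    e ≫ cocycleToHom w hw = cocycleToHom w' hw' := by
  subst h
  ext p
  change e.f p ≫ (w.rightShift n 0 (zero_add n)).v p p (add_zero p) =
    (((Cochain.ofHom e).comp w (zero_add n)).rightShift n 0 (zero_add n)).v p p (add_zero p)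
  rw [Cochain.rightShift_v _ n 0 (zero_add n) p p (add_zero p) (p + n) rfl,
    Cochain.rightShift_v _ n 0 (zero_add n) p p (add_zero p) (p + n) rfl,
    Cochain.zero_cochain_comp_v, Cochain.ofHom_v, Category.assoc]

lemma map_comp_canD {F F' G : CochainComplex C ℤ} {n : ℤ} (e : F' ⟶ F)
    (w : Cochain F G n) (hw : δ n (n + 1) w = 0) (w' : Cochain F' G n)
    (hw' : δ n (n + 1) w' = 0) (h : (Cochain.ofHom e).comp w (zero_add n) = w') :
    Q.map e ≫ canD w hw = canD w' hw' := by
  rw [canD, canD, ← Q.map_comp_assoc, comp_cocycleToHom e w hw w' hw' h]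

theorem section_and_can_square (V : C) (A : CochainComplex C ℤ)
    (ε : (HomologicalComplex.single C (ComplexShape.up ℤ) 0).obj V ⟶ A)
    (φ : ∀ n : ℤ, Cochain ((HomologicalComplex.single C (ComplexShape.up ℤ) 0).obj V) A n →+
      Cochain A A n)
    (hφδ : ∀ (n : ℤ) (f : Cochain ((HomologicalComplex.single C (ComplexShape.up ℤ) 0).obj V) A n),
      δ n (n + 1) (φ n f) = φ (n + 1) (δ n (n + 1) f))
    (hφε : ∀ (n : ℤ) (f : Cochain ((HomologicalComplex.single C (ComplexShape.up ℤ) 0).obj V) A n),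
      (Cochain.ofHom ε).comp (φ n f) (zero_add n) = f) :
    ∀ (n : ℤ) (u : Cochain ((HomologicalComplex.single C (ComplexShape.up ℤ) 0).obj V) A n)
      (hu : δ n (n + 1) u = 0),
      -- H(φ) is a section of the restriction [ε,A] (at the level of representatives):
      (Cochain.ofHom ε).comp (φ n u) (zero_add n) = u ∧
      -- the square commutes: can_{V,A} = Ext(ε,A) ∘ can_{A,A} ∘ H(φ):
      canD u hu = Q.map ε ≫ canD (φ n u) (by rw [hφδ, hu, map_zero]) := fun n u hu =>
  ⟨hφε n u, (map_comp_canD ε (φ n u) _ u hu (hφε n u)).symm⟩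
end
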